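/- For every t ≥ 0 with t ≠ |ζᵢ| for all i, one has p(t) ∈ ∂J(u(t)) and u is differentiable at t with u'(t) = -p(t); moreover u(0) = f. Hence the componentwise soft-thresholding function u(t) = Vᵀs(t), sᵢ(t) = sign(ζᵢ)·max(|ζᵢ| - t, 0), solves the gradient flow ∂ₜu(t) ∈ -∂J(u(t)), u(0) = f, away from the finitely many times {|ζᵢ|}. -/

import Mathlib

open Matrix

/-- `p` is a subgradient of `J` at `u` in `ℝⁿ`: `J v ≥ J u + ⟨p, v - u⟩` for all `v`. -/
def IsSubgradientAt {n : ℕ} (J : (Fin n → ℝ) → ℝ) (u p : Fin n → ℝ) : Prop :=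
  ∀ v : Fin n → ℝ, J v ≥ J u + p ⬝ᵥ (v - u)

/-! Since `V` is orthogonal, `V u(t) = s(t)` and `J = ‖·‖₁ ∘ V`, so everything decouples into
scalar problems. A subgradient of `‖·‖₁` at `V u` pulls back along `V` to the subgradient `Vᵀ q`
of `J` at `u`, and `qᵢ(t)` is a subgradient of `|·|` at `sᵢ(t)` because `|qᵢ| ≤ 1` and
`qᵢ sᵢ = |sᵢ|`. Away from the kink `t = |ζᵢ|`, `sᵢ` is locally affine with slope `-qᵢ(t)`. -/

namespace Real

theorem sign_mul_abs (r : ℝ) : sign r * |r| = r := by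
  rcases lt_trichotomy r 0 with h | rfl | h
  · rw [sign_of_neg h, abs_of_neg h]; ring
  · simp
  · rw [sign_of_pos h, abs_of_pos h, one_mul]

theorem abs_sign_le_one (r : ℝ) : |sign r| ≤ 1 := by
  rcases sign_apply_eq r with h | h | h <;> simp [h]

theorem sign_mul_sign_self (r : ℝ) : sign r * sign r = |sign r| := by
  rcases sign_apply_eq r with h | h | h <;> simp [h]

end Real

theorem abs_add_mul_sub_le_abs {q x : ℝ} (hq : |q| ≤ 1) (hqx : q * x = |x|) (y : ℝ) :
    |x| + q * (y - x) ≤ |y| :=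
  calc |x| + q * (y - x) = q * y := by rw [← hqx]; ring
    _ ≤ |q| * |y| := by rw [← abs_mul]; exact le_abs_self _
    _ ≤ |y| := mul_le_of_le_one_left (abs_nonneg y) hq

theorem isSubgradientAt_sum_abs {n : ℕ} {x q : Fin n → ℝ}
    (hq : ∀ i, |q i| ≤ 1) (hqx : ∀ i, q i * x i = |x i|) :
    IsSubgradientAt (fun y => ∑ i, |y i|) x q := by
  intro y
  rw [ge_iff_le, dotProduct, ← Finset.sum_add_distrib]
  exact Finset.sum_le_sum fun i _ => abs_add_mul_sub_le_abs (hq i) (hqx i) (y i)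

theorem IsSubgradientAt.comp_mulVec {m n : ℕ} {g : (Fin m → ℝ) → ℝ}
    (V : Matrix (Fin m) (Fin n) ℝ) {u : Fin n → ℝ} {q : Fin m → ℝ}
    (h : IsSubgradientAt g (V *ᵥ u) q) :
    IsSubgradientAt (fun w => g (V *ᵥ w)) u (Vᵀ *ᵥ q) := by
  intro v
  rw [mulVec_transpose, ← dotProduct_mulVec, mulVec_sub]
  exact h (V *ᵥ v)

theorem HasDerivAt.mulVec {m n : Type*} [Fintype m] [Fintype n] (A : Matrix m n ℝ)
    {s : ℝ → n → ℝ} {s' : n → ℝ} {t : ℝ} (h : HasDerivAt s s' t) :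
    HasDerivAt (fun t => A *ᵥ s t) (A *ᵥ s') t :=
  (Matrix.mulVecLin A).toContinuousLinearMap.hasFDerivAt.comp_hasDerivAt t h

noncomputable def softThreshold (t a : ℝ) : ℝ :=
  Real.sign a * max (|a| - t) 0

noncomputable def softThresholdSubgrad (t a : ℝ) : ℝ :=
  if t < |a| then Real.sign a else 0

theorem softThreshold_zero (a : ℝ) : softThreshold 0 a = a := by
  rw [softThreshold, sub_zero, max_eq_left (abs_nonneg a), Real.sign_mul_abs]

theorem abs_softThresholdSubgrad_le_one (t a : ℝ) : |softThresholdSubgrad t a| ≤ 1 := by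
  unfold softThresholdSubgrad
  split_ifs
  · exact Real.abs_sign_le_one a
  · simp

theorem softThresholdSubgrad_mul_softThreshold (t a : ℝ) :
    softThresholdSubgrad t a * softThreshold t a = |softThreshold t a| := by
  unfold softThresholdSubgrad softThreshold
  split_ifs with h
  · rw [← mul_assoc, Real.sign_mul_sign_self, abs_mul, abs_of_nonneg (le_max_right (|a| - t) 0)]
  · rw [max_eq_right (by linarith [not_lt.mp h])]; simp

theorem hasDerivAt_softThreshold {t a : ℝ} (ht : t ≠ |a|) :
    HasDerivAt (softThreshold · a) (-softThresholdSubgrad t a) t := by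
  unfold softThresholdSubgrad
  rcases ht.lt_or_gt with h | h
  · rw [if_pos h]
    have hlin : HasDerivAt (fun t => Real.sign a * (|a| - t)) (-Real.sign a) t := by
      simpa using ((hasDerivAt_id t).const_sub |a|).const_mul (Real.sign a)
    refine hlin.congr_of_eventuallyEq ?_
    filter_upwards [eventually_lt_nhds h] with s hs
    rw [softThreshold, max_eq_left (by linarith)]
  · rw [if_neg h.not_gt, neg_zero]
    refine (hasDerivAt_const t 0).congr_of_eventuallyEq ?_
    filter_upwards [eventually_gt_nhds h] with s hs
    rw [softThreshold, max_eq_right (by linarith), mul_zero]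

/-- For `J(u) = ‖Vu‖₁` with `V` orthogonal, the componentwise soft-thresholding
function `u(t) = Vᵀ s(t)`, `sᵢ(t) = sign(ζᵢ)·max(|ζᵢ| - t, 0)`, `ζ = Vf`, solves the
gradient flow `∂ₜu(t) ∈ -∂J(u(t))`, `u(0) = f`, away from the times `{|ζᵢ|}`,
with subgradient `p(t) = Vᵀ q(t)`, `qᵢ(t) = sign(ζᵢ)` if `|ζᵢ| > t`, `0` otherwise. -/
theorem softThresholding_solves_gradientFlow
    {n : ℕ} (V : Matrix (Fin n) (Fin n) ℝ) (hV : Vᵀ * V = 1)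
    (J : (Fin n → ℝ) → ℝ) (hJ : ∀ w, J w = ∑ i, |V.mulVec w i|)
    (f ζ : Fin n → ℝ) (hζ : ζ = V.mulVec f)
    (u p : ℝ → Fin n → ℝ)
    (hu : ∀ t : ℝ, u t = Vᵀ.mulVec (fun i => Real.sign (ζ i) * max (|ζ i| - t) 0))
    (hp : ∀ t : ℝ, p t = Vᵀ.mulVec (fun i => if t < |ζ i| then Real.sign (ζ i) else 0)) :
    u 0 = f ∧
      ∀ t : ℝ, 0 ≤ t → (∀ i, t ≠ |ζ i|) →
        IsSubgradientAt J (u t) (p t) ∧ HasDerivAt u (-(p t)) t := by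
  change ∀ t, u t = Vᵀ *ᵥ fun i => softThreshold t (ζ i) at hu
  change ∀ t, p t = Vᵀ *ᵥ fun i => softThresholdSubgrad t (ζ i) at hp
  obtain rfl : J = fun w => ∑ i, |(V *ᵥ w) i| := funext hJ
  refine ⟨?_, fun t _ hζt => ⟨?_, ?_⟩⟩
  · simp only [hu, softThreshold_zero, hζ, mulVec_mulVec, hV, one_mulVec]
  · have hVu : V *ᵥ u t = fun i => softThreshold t (ζ i) := by
      rw [hu, mulVec_mulVec, mul_eq_one_comm.mp hV, one_mulVec]
    rw [hp]
    refine IsSubgradientAt.comp_mulVec (g := fun y => ∑ i, |y i|) V ?_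
    rw [hVu]
    exact isSubgradientAt_sum_abs (fun i => abs_softThresholdSubgrad_le_one t (ζ i))
      (fun i => softThresholdSubgrad_mul_softThreshold t (ζ i))
  · rw [funext hu, hp, ← mulVec_neg]
    exact HasDerivAt.mulVec Vᵀ (hasDerivAt_pi.mpr fun i => hasDerivAt_softThreshold (hζt i))
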